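/- arXiv:1004.2274 — 2 statements merged into one kernel-verified Lean document; each statement's English description precedes it below -/
import Mathlib

section
/- Let u be a C² function on the closed unit ball in ℝ² satisfying ∫_{B_1(0)} |1 − |Du|²| |D²u| dz ≤ β and ∫_{B_1(0)} |1 − |Du|²| dz ≤ β for some β ∈ (0,1). Then for every unit vector w ∈ S¹ there exists a set G_w ⊂ P_{w^⊥}(B_1(0)) with |P_{w^⊥}(B_1(0)) \ G_w| ≤ c β^{1/3} (one-dimensional Lebesgue measure, c an absolute constant) such that for every x ∈ G_w: sup{ ||Du(z)| − 1| : z ∈ P_{w^⊥}^{-1}(x) ∩ B_1(0) } ≤ 5 β^{1/3}. -/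
open MeasureTheory Metric Set Filter
open scoped Real NNReal ENNReal Topology BigOperators

noncomputable section

abbrev E2 : Type := EuclideanSpace ℝ (Fin 2)

def e2 (i : Fin 2) : E2 := EuclideanSpace.single i 1

/-- `i`-th partial derivative of `u`, computed within the closed unit ball. -/
def pdB (u : E2 → ℝ) (i : Fin 2) (z : E2) : ℝ :=
  fderivWithin ℝ u (closedBall (0 : E2) 1) z (e2 i)

/-- Second partial derivative `∂_i ∂_j` of `u`, computed within the closed unit ball. -/
def pd2B (u : E2 → ℝ) (i j : Fin 2) (z : E2) : ℝ :=
  fderivWithin ℝ (fun y => pdB u j y) (closedBall (0 : E2) 1) z (e2 i)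

/-- `|Du(z)|²`. -/
def gradSq (u : E2 → ℝ) (z : E2) : ℝ := ∑ i, (pdB u i z) ^ 2

/-- `|D²u(z)|`, the Euclidean norm of the Hessian matrix. -/
def hessNorm (u : E2 → ℝ) (z : E2) : ℝ :=
  Real.sqrt (∑ i, ∑ j, (pd2B u i j z) ^ 2)

/-- The gradient of `u` (within the closed unit ball) as a vector in `ℝ²`. -/
def gradVec (u : E2 → ℝ) (z : E2) : E2 :=
  (EuclideanSpace.equiv (Fin 2) ℝ).symm (fun i => pdB u i z)

/-- The vector `w` rotated by `π/2` (a unit vector spanning `w^⊥`). -/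
def perp (w : E2) : E2 := (EuclideanSpace.equiv (Fin 2) ℝ).symm ![-(w 1), w 0]

/-! Write `φ = 1 - |Du|²` along the line `⟪perp w, ·⟫ = t` and `ε = β^{1/3}`. By Fubini and
Chebyshev, outside a set of `t` of measure `O(ε)` the chord of `B_1(0)` on that line has length at
least `2ε` and carries `∫ |φ| < 8ε²` and `∫ |φ| |D²u| < 2ε²/5`. The first bound forces
`|φ| ≤ 4ε` somewhere on the chord. Wherever `|φ| ≥ 4ε`, `|φ'| ≤ 2 |Du| |D²u| ≤ (5/(2ε)) |φ| |D²u|`,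
so `|φ|` cannot climb from `4ε` to `5ε` without spending `∫ |φ| |D²u| ≥ 2ε²/5`. Hence `|φ| ≤ 5ε`
on the whole chord, and `||Du| - 1| ≤ |1 - |Du|²|`. -/

open scoped Interval InnerProductSpace

namespace GoodLines

section Inequalities

lemma abs_sqrt_sub_one_le {q : ℝ} (hq : 0 ≤ q) : |√q - 1| ≤ |1 - q| := by
  have hfac : 1 - q = (1 - √q) * (1 + √q) := by nlinarith [Real.sq_sqrt hq]
  rw [hfac, abs_mul, abs_sub_comm]
  exact le_mul_of_one_le_right (abs_nonneg _)
    (by rw [abs_of_nonneg (by positivity)]; linarith [Real.sqrt_nonneg q])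

lemma sqrt_le_one_add_abs_one_sub {q : ℝ} (hq : 0 ≤ q) : √q ≤ 1 + |1 - q| := by
  linarith [le_abs_self (√q - 1), abs_sqrt_sub_one_le hq]

lemma two_mul_one_add_le_of_four_mul_le {ε p : ℝ} (hε : 0 < ε) (hε1 : ε ≤ 1) (hp : 4 * ε ≤ p) :
    2 * (1 + p) ≤ 5 / (2 * ε) * p := by
  rw [div_mul_eq_mul_div, le_div_iff₀ (by positivity)]
  nlinarith

lemma abs_sum_mul_sum_mul_le {ι : Type*} [Fintype ι] (a w : ι → ℝ) (H : ι → ι → ℝ) :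
    |∑ i, a i * ∑ j, w j * H j i| ≤
      √(∑ i, a i ^ 2) * √(∑ i, ∑ j, H i j ^ 2) * √(∑ j, w j ^ 2) := by
  have hH : ∑ i, (∑ j, w j * H j i) ^ 2 ≤ (∑ i, ∑ j, H i j ^ 2) * ∑ j, w j ^ 2 :=
    calc ∑ i, (∑ j, w j * H j i) ^ 2 ≤ ∑ i, (∑ j, w j ^ 2) * ∑ j, H j i ^ 2 :=
          Finset.sum_le_sum fun i _ => Finset.sum_mul_sq_le_sq_mul_sq _ _ _
      _ = (∑ i, ∑ j, H i j ^ 2) * ∑ j, w j ^ 2 := by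
          rw [← Finset.mul_sum, Finset.sum_comm, mul_comm]
  have ha : 0 ≤ ∑ i, a i ^ 2 := Finset.sum_nonneg fun _ _ => sq_nonneg _
  rw [mul_assoc, ← Real.sqrt_mul (Finset.sum_nonneg fun _ _ => Finset.sum_nonneg fun _ _ =>
    sq_nonneg _), ← Real.sqrt_mul ha]
  exact Real.abs_le_sqrt ((Finset.sum_mul_sq_le_sq_mul_sq _ _ _).trans
    (mul_le_mul_of_nonneg_left hH ha))

end Inequalities

section OneDim

variable {φ M : ℝ → ℝ} {a b α : ℝ}

lemma abs_sub_le_integral_of_abs_deriv_le (hab : a ≤ b)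
    (hφ : ∀ s ∈ Icc a b, DifferentiableAt ℝ φ s) (hM : IntegrableOn M (Icc a b))
    (hbound : ∀ s ∈ Ioo a b, |deriv φ s| ≤ M s) :
    |φ b - φ a| ≤ ∫ s in a..b, M s := by
  have hcont : ContinuousOn φ (Icc a b) := fun s hs =>
    (hφ s hs).continuousAt.continuousWithinAt
  have hderiv (s) (hs : s ∈ Ioo a b) : HasDerivAt φ (deriv φ s) s :=
    (hφ s (Ioo_subset_Icc_self hs)).hasDerivAt
  have hup := intervalIntegral.sub_le_integral_of_hasDeriv_right_of_le hab hcont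
    (fun s hs => (hderiv s hs).hasDerivWithinAt) hM
    (fun s hs => (le_abs_self _).trans (hbound s hs))
  have hdown := intervalIntegral.sub_le_integral_of_hasDeriv_right_of_le hab hcont.neg
    (fun s hs => (hderiv s hs).neg.hasDerivWithinAt) hM
    (fun s hs => (neg_le_abs _).trans (hbound s hs))
  rw [Pi.neg_apply, Pi.neg_apply] at hdown
  exact abs_le.2 ⟨by linarith, hup⟩

/-- Run the estimate from the last point `c` of `[a, b]` where `|φ c| ≤ α`. -/
lemma abs_le_add_integral_of_abs_deriv_le (hab : a ≤ b)
    (hφ : ∀ s ∈ Icc a b, DifferentiableAt ℝ φ s) (hM : ContinuousOn M (Icc a b))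
    (hM0 : ∀ s ∈ Icc a b, 0 ≤ M s) (hbound : ∀ s ∈ Icc a b, α ≤ |φ s| → |deriv φ s| ≤ M s)
    (ha : |φ a| ≤ α) : |φ b| ≤ α + ∫ s in a..b, M s := by
  have hφc : ContinuousOn φ (Icc a b) := fun s hs =>
    (hφ s hs).continuousAt.continuousWithinAt
  have hS : IsCompact (Icc a b ∩ (|φ ·|) ⁻¹' Iic α) := isCompact_Icc.of_isClosed_subset
    (hφc.abs.preimage_isClosed_of_isClosed isClosed_Icc isClosed_Iic) inter_subset_left
  obtain ⟨c, ⟨⟨hac, hcb⟩, hc⟩, hlast⟩ := hS.exists_isGreatest ⟨a, ⟨left_mem_Icc.2 hab, ha⟩⟩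
  have hc' : |φ c| ≤ α := hc
  have hsub : Icc c b ⊆ Icc a b := Icc_subset_Icc_left hac
  have hclimb : |φ b - φ c| ≤ ∫ s in c..b, M s := by
    refine abs_sub_le_integral_of_abs_deriv_le hcb (fun s hs => hφ s (hsub hs))
      (hM.mono hsub).integrableOn_Icc fun s hs => hbound s (hsub (Ioo_subset_Icc_self hs)) ?_
    by_contra! hlow
    exact hs.1.not_ge (hlast ⟨hsub (Ioo_subset_Icc_self hs), hlow.le⟩)
  have hmono : ∫ s in c..b, M s ≤ ∫ s in a..b, M s :=
    intervalIntegral.integral_mono_interval hac hcb le_rfl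
      ((ae_restrict_mem measurableSet_Ioc).mono fun s hs => hM0 s (Ioc_subset_Icc_self hs))
      (hM.intervalIntegrable_of_Icc hab)
  linarith [abs_sub_abs_le_abs_sub (φ b) (φ c)]

lemma abs_le_add_integral_uIoc_of_abs_deriv_le {x y : ℝ}
    (hφ : ∀ s ∈ uIcc x y, DifferentiableAt ℝ φ s) (hM : ContinuousOn M (uIcc x y))
    (hM0 : ∀ s ∈ uIcc x y, 0 ≤ M s) (hbound : ∀ s ∈ uIcc x y, α ≤ |φ s| → |deriv φ s| ≤ M s)
    (hx : |φ x| ≤ α) : |φ y| ≤ α + ∫ s in Ι x y, M s := by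
  rcases le_total x y with hxy | hyx
  · rw [uIcc_of_le hxy] at hφ hM hM0 hbound
    rw [uIoc_of_le hxy, ← intervalIntegral.integral_of_le hxy]
    exact abs_le_add_integral_of_abs_deriv_le hxy hφ hM hM0 hbound hx
  · rw [uIcc_of_ge hyx] at hφ hM hM0 hbound
    rw [uIoc_of_ge hyx, ← intervalIntegral.integral_of_le hyx]
    have hneg {s : ℝ} (hs : s ∈ Icc (-x) (-y)) : -s ∈ Icc y x :=
      ⟨by linarith [hs.2], by linarith [hs.1]⟩
    have h := abs_le_add_integral_of_abs_deriv_le (φ := fun s => φ (-s)) (M := fun s => M (-s))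
      (neg_le_neg hyx) (fun s hs => differentiableAt_comp_neg.2 (hφ (-s) (hneg hs)))
      (hM.comp continuousOn_neg fun s hs => hneg hs) (fun s hs => hM0 (-s) (hneg hs))
      (fun s hs h => by rw [deriv_comp_neg, abs_neg]; exact hbound (-s) (hneg hs) h)
      (by rwa [neg_neg])
    rwa [neg_neg, intervalIntegral.integral_comp_neg, neg_neg, neg_neg] at h

lemma ofReal_setIntegral_uIoc_le {g : ℝ → ℝ} {x y : ℝ} {I : Set ℝ} (hsub : uIcc x y ⊆ I)
    (hg : ContinuousOn g (uIcc x y)) (hg0 : ∀ s ∈ uIcc x y, 0 ≤ g s) :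
    ENNReal.ofReal (∫ s in Ι x y, g s) ≤ ∫⁻ s in I, ENNReal.ofReal (g s) := by
  have hint : IntegrableOn g (Ι x y) :=
    (hg.integrableOn_compact isCompact_uIcc).mono_set uIoc_subset_uIcc
  rw [ofReal_integral_eq_lintegral_ofReal hint
    ((ae_restrict_mem measurableSet_uIoc).mono fun s hs => hg0 s (uIoc_subset_uIcc hs))]
  exact lintegral_mono_set (uIoc_subset_uIcc.trans hsub)

lemma abs_le_of_lintegral_lt {φ N : ℝ → ℝ} {a b ε : ℝ} (hε : 0 < ε) (hε1 : ε ≤ 1)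
    (hab : 2 * ε ≤ b - a) (hφ : ∀ s ∈ Ioo a b, DifferentiableAt ℝ φ s)
    (hN : ContinuousOn N (Ioo a b)) (hN0 : ∀ s ∈ Ioo a b, 0 ≤ N s)
    (hderiv : ∀ s ∈ Ioo a b, |deriv φ s| ≤ 2 * (1 + |φ s|) * N s)
    (hmass : ∫⁻ s in Ioo a b, ENNReal.ofReal |φ s| < ENNReal.ofReal (8 * ε ^ 2))
    (henergy : ∫⁻ s in Ioo a b, ENNReal.ofReal (|φ s| * N s) < ENNReal.ofReal (2 / 5 * ε ^ 2))
    {y : ℝ} (hy : y ∈ Ioo a b) : |φ y| ≤ 5 * ε := by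
  obtain ⟨x, hx, hxsmall⟩ : ∃ x ∈ Ioo a b, |φ x| ≤ 4 * ε := by
    by_contra! hlarge
    refine hmass.not_ge ?_
    calc ENNReal.ofReal (8 * ε ^ 2) ≤ ENNReal.ofReal (4 * ε) * volume (Ioo a b) := by
          rw [Real.volume_Ioo, ← ENNReal.ofReal_mul (by positivity)]
          exact ENNReal.ofReal_le_ofReal (by nlinarith)
      _ = ∫⁻ s in Ioo a b, ENNReal.ofReal (4 * ε) := (setLIntegral_const _ _).symm
      _ ≤ ∫⁻ s in Ioo a b, ENNReal.ofReal |φ s| := setLIntegral_mono' measurableSet_Ioo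
          fun s hs => ENNReal.ofReal_le_ofReal (hlarge s hs).le
  have hsub : uIcc x y ⊆ Ioo a b := ordConnected_Ioo.uIcc_subset hx hy
  have hφc : ContinuousOn φ (uIcc x y) := fun s hs =>
    (hφ s (hsub hs)).continuousAt.continuousWithinAt
  have hgc : ContinuousOn (fun s => |φ s| * N s) (uIcc x y) := hφc.abs.mul (hN.mono hsub)
  have hg0 (s) (hs : s ∈ uIcc x y) : 0 ≤ |φ s| * N s :=
    mul_nonneg (abs_nonneg _) (hN0 s (hsub hs))
  have hclimb := abs_le_add_integral_uIoc_of_abs_deriv_le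
    (M := fun s => 5 / (2 * ε) * (|φ s| * N s)) (fun s hs => hφ s (hsub hs))
    (continuousOn_const.mul hgc) (fun s hs => mul_nonneg (by positivity) (hg0 s hs))
    (fun s hs hs4 => (hderiv s (hsub hs)).trans <| by
      rw [← mul_assoc]
      exact mul_le_mul_of_nonneg_right (two_mul_one_add_le_of_four_mul_le hε hε1 hs4)
        (hN0 s (hsub hs)))
    hxsmall
  have hsmall : ∫ s in Ι x y, |φ s| * N s < 2 / 5 * ε ^ 2 :=
    (ENNReal.ofReal_lt_ofReal_iff (by positivity)).1 <|
      (ofReal_setIntegral_uIoc_le hsub hgc hg0).trans_lt henergy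
  rw [integral_const_mul] at hclimb
  have hcost : 5 / (2 * ε) * ∫ s in Ι x y, |φ s| * N s < ε :=
    calc _ < 5 / (2 * ε) * (2 / 5 * ε ^ 2) := mul_lt_mul_of_pos_left hsmall (by positivity)
      _ = ε := by field_simp
  linarith

end OneDim

section Derivatives

lemma gradSq_nonneg (u : E2 → ℝ) (z : E2) : 0 ≤ gradSq u z :=
  Finset.sum_nonneg fun _ _ => sq_nonneg _

lemma fderivWithin_pdB_apply (u : E2 → ℝ) (i : Fin 2) (z w : E2) :
    fderivWithin ℝ (pdB u i) (closedBall 0 1) z w = ∑ j, w j * pd2B u j i z := by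
  conv_lhs => rw [← (EuclideanSpace.basisFun (Fin 2) ℝ).sum_repr w]
  simp [pd2B, e2]

lemma sum_sq_eq_one_of_norm_eq_one {w : E2} (hw : ‖w‖ = 1) : ∑ j, w j ^ 2 = 1 := by
  have h := EuclideanSpace.real_norm_sq_eq w
  rwa [hw, one_pow, eq_comm] at h

lemma abs_two_mul_sum_pdB_mul_le (u : E2 → ℝ) {w : E2} (hw : ‖w‖ = 1) (z : E2) :
    |2 * ∑ i, pdB u i z * ∑ j, w j * pd2B u j i z| ≤ 2 * √(gradSq u z) * hessNorm u z := by
  have h := abs_sum_mul_sum_mul_le (pdB u · z) w (pd2B u · · z)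
  rw [sum_sq_eq_one_of_norm_eq_one hw, Real.sqrt_one, mul_one] at h
  rw [abs_mul, abs_two, mul_assoc]
  exact mul_le_mul_of_nonneg_left h zero_le_two

lemma uniqueDiffOn_closedBall : UniqueDiffOn ℝ (closedBall (0 : E2) 1) :=
  uniqueDiffOn_convex (convex_closedBall _ _) (by simp [interior_closedBall])

variable {u : E2 → ℝ}

lemma contDiffOn_pdB (hu : ContDiffOn ℝ 2 u (closedBall (0 : E2) 1)) (i : Fin 2) :
    ContDiffOn ℝ 1 (pdB u i) (closedBall (0 : E2) 1) :=
  (hu.fderivWithin uniqueDiffOn_closedBall (by norm_num)).clm_apply contDiffOn_const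

lemma continuousOn_gradSq (hu : ContDiffOn ℝ 2 u (closedBall (0 : E2) 1)) :
    ContinuousOn (gradSq u) (closedBall (0 : E2) 1) :=
  continuousOn_finsetSum _ fun i _ => (contDiffOn_pdB hu i).continuousOn.pow 2

lemma continuousOn_hessNorm (hu : ContDiffOn ℝ 2 u (closedBall (0 : E2) 1)) :
    ContinuousOn (hessNorm u) (closedBall (0 : E2) 1) := by
  have hd (j : Fin 2) :=
    (contDiffOn_pdB hu j).continuousOn_fderivWithin uniqueDiffOn_closedBall le_rfl
  refine Real.continuous_sqrt.comp_continuousOn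
    (continuousOn_finsetSum _ fun i _ => continuousOn_finsetSum _ fun j _ => ?_)
  exact ((ContinuousLinearMap.apply ℝ ℝ (e2 i)).continuous.comp_continuousOn (hd j)).pow 2

lemma hasDerivAt_pdB_comp_line (hu : ContDiffOn ℝ 2 u (closedBall (0 : E2) 1)) {c w : E2}
    {s : ℝ} (hs : c + s • w ∈ ball (0 : E2) 1) (i : Fin 2) :
    HasDerivAt (fun r : ℝ => pdB u i (c + r • w)) (∑ j, w j * pd2B u j i (c + s • w)) s := by
  have hD : HasFDerivAt (pdB u i) (fderivWithin ℝ (pdB u i) (closedBall 0 1) (c + s • w))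
      (c + s • w) :=
    ((contDiffOn_pdB hu i).differentiableOn one_ne_zero _ (ball_subset_closedBall hs)
      ).hasFDerivWithinAt.hasFDerivAt (closedBall_mem_nhds_of_mem hs)
  have hline : HasDerivAt (fun r : ℝ => c + r • w) w s := by
    simpa using ((hasDerivAt_id s).smul_const w).const_add c
  exact (hD.comp_hasDerivAt s hline).congr_deriv (fderivWithin_pdB_apply u i _ w)

lemma hasDerivAt_gradSq_comp_line (hu : ContDiffOn ℝ 2 u (closedBall (0 : E2) 1)) {c w : E2}
    {s : ℝ} (hs : c + s • w ∈ ball (0 : E2) 1) :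
    HasDerivAt (fun r : ℝ => gradSq u (c + r • w))
      (2 * ∑ i, pdB u i (c + s • w) * ∑ j, w j * pd2B u j i (c + s • w)) s := by
  have hsum := HasDerivAt.fun_sum fun i (_ : i ∈ Finset.univ) =>
    (hasDerivAt_pdB_comp_line hu hs i).pow 2
  refine hsum.congr_deriv ?_ |>.congr_of_eventuallyEq ?_
  · simp only [Fin.sum_univ_two]; ring
  · exact Eventually.of_forall fun r => by simp [gradSq]

end Derivatives

section Lines

lemma inner_self_perp (w : E2) : ⟪w, perp w⟫_ℝ = 0 := by
  simp [perp, PiLp.inner_apply, Fin.sum_univ_two]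
  ring

lemma norm_perp (w : E2) : ‖perp w‖ = ‖w‖ := by
  simp [EuclideanSpace.norm_eq, perp, Fin.sum_univ_two, add_comm]

lemma orthonormal_perp {w : E2} (hw : ‖w‖ = 1) : Orthonormal ℝ ![perp w, w] := by
  rw [orthonormal_iff_ite]
  intro i j
  fin_cases i <;> fin_cases j <;> simp [inner_self_perp, real_inner_comm w, norm_perp, hw]

def lineBasis {w : E2} (hw : ‖w‖ = 1) : OrthonormalBasis (Fin 2) ℝ E2 :=
  (basisOfOrthonormalOfCardEqFinrank (orthonormal_perp hw) (by simp)).toOrthonormalBasis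
    (by rw [coe_basisOfOrthonormalOfCardEqFinrank]; exact orthonormal_perp hw)

lemma coe_lineBasis {w : E2} (hw : ‖w‖ = 1) : ⇑(lineBasis hw) = ![perp w, w] := by
  simp [lineBasis, coe_basisOfOrthonormalOfCardEqFinrank]

def lineCoords (w : E2) (p : ℝ × ℝ) : E2 := p.1 • perp w + p.2 • w

lemma continuous_lineCoords (w : E2) : Continuous (lineCoords w) := by
  unfold lineCoords
  fun_prop

lemma lineCoords_inner {w : E2} (hw : ‖w‖ = 1) (z : E2) :
    lineCoords w (⟪perp w, z⟫_ℝ, ⟪w, z⟫_ℝ) = z := by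
  simpa [lineCoords, coe_lineBasis, Fin.sum_univ_two] using (lineBasis hw).sum_repr' z

lemma measurePreserving_lineCoords {w : E2} (hw : ‖w‖ = 1) :
    MeasurePreserving (lineCoords w) := by
  have h : lineCoords w =
      (lineBasis hw).repr.symm ∘ WithLp.toLp 2 ∘ MeasurableEquiv.finTwoArrow.symm := by
    ext p i
    simp [lineCoords, coe_lineBasis, ← (lineBasis hw).sum_repr_symm, Fin.sum_univ_two]
  rw [h]
  exact (lineBasis hw).measurePreserving_repr_symm.comp
    ((PiLp.volume_preserving_toLp (Fin 2)).comp (volume_preserving_finTwoArrow ℝ).symm)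

lemma norm_lineCoords_sq {w : E2} (hw : ‖w‖ = 1) (p : ℝ × ℝ) :
    ‖lineCoords w p‖ ^ 2 = p.1 ^ 2 + p.2 ^ 2 := by
  rw [lineCoords, norm_add_sq_real, inner_smul_left, inner_smul_right, real_inner_comm,
    inner_self_perp, norm_smul, norm_smul, norm_perp, hw]
  simp

lemma lineCoords_mem_ball_iff {w : E2} (hw : ‖w‖ = 1) (t s : ℝ) :
    lineCoords w (t, s) ∈ ball (0 : E2) 1 ↔ s ∈ Ioo (-√(1 - t ^ 2)) √(1 - t ^ 2) := by
  rw [mem_ball_zero_iff, mem_Ioo, ← abs_lt, Real.lt_sqrt (abs_nonneg s), sq_abs,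
    ← sq_lt_one_iff₀ (norm_nonneg _), norm_lineCoords_sq hw, lt_sub_iff_add_lt']

/-- The integral of `g` over the chord of `B_1(0)` on the line `⟪perp w, ·⟫ = t`; the chord is
empty for `|t| ≥ 1` because `Real.sqrt` vanishes on negative numbers. -/
def lineLIntegral (g : E2 → ℝ) (w : E2) (t : ℝ) : ℝ≥0∞ :=
  ∫⁻ s in Ioo (-√(1 - t ^ 2)) √(1 - t ^ 2), ENNReal.ofReal (g (lineCoords w (t, s)))

variable {g : E2 → ℝ} {w : E2}

lemma lineLIntegral_eq (hw : ‖w‖ = 1) (t : ℝ) :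
    lineLIntegral g w t =
      ∫⁻ s, (ball (0 : E2) 1).indicator (fun z => ENNReal.ofReal (g z)) (lineCoords w (t, s)) := by
  rw [lineLIntegral, ← lintegral_indicator measurableSet_Ioo]
  congr 1 with s
  by_cases hs : s ∈ Ioo (-√(1 - t ^ 2)) √(1 - t ^ 2)
  · rw [indicator_of_mem hs, indicator_of_mem ((lineCoords_mem_ball_iff hw t s).2 hs)]
  · rw [indicator_of_notMem hs, indicator_of_notMem (mt (lineCoords_mem_ball_iff hw t s).1 hs)]

lemma measurable_indicator_ball (hg : ContinuousOn g (ball (0 : E2) 1)) :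
    Measurable ((ball (0 : E2) 1).indicator fun z => ENNReal.ofReal (g z)) := by
  classical
  rw [← piecewise_eq_indicator]
  exact (ENNReal.continuous_ofReal.comp_continuousOn hg).measurable_piecewise
    continuousOn_const measurableSet_ball

lemma measurable_lineLIntegral (hw : ‖w‖ = 1) (hg : ContinuousOn g (ball (0 : E2) 1)) :
    Measurable (lineLIntegral g w) := by
  simp_rw [funext (lineLIntegral_eq hw)]
  exact ((measurable_indicator_ball hg).comp
    (continuous_lineCoords w).measurable).lintegral_prod_right'

lemma lintegral_lineLIntegral (hw : ‖w‖ = 1) (hg : ContinuousOn g (ball (0 : E2) 1)) :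
    ∫⁻ t, lineLIntegral g w t = ∫⁻ z in ball (0 : E2) 1, ENNReal.ofReal (g z) := by
  simp_rw [lineLIntegral_eq hw]
  rw [← lintegral_indicator measurableSet_ball, ← (measurePreserving_lineCoords hw).lintegral_comp
    (measurable_indicator_ball hg), Measure.volume_eq_prod]
  exact (lintegral_prod _ ((measurable_indicator_ball hg).comp
    (continuous_lineCoords w).measurable).aemeasurable).symm

lemma lintegral_lineLIntegral_le (hw : ‖w‖ = 1) (hg : ContinuousOn g (closedBall (0 : E2) 1))
    (hg0 : ∀ z, 0 ≤ g z) {β : ℝ} (hβ : ∫ z in ball (0 : E2) 1, g z ≤ β) :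
    ∫⁻ t, lineLIntegral g w t ≤ ENNReal.ofReal β := by
  rw [lintegral_lineLIntegral hw (hg.mono ball_subset_closedBall),
    ← ofReal_integral_eq_lintegral_ofReal
      ((hg.integrableOn_compact (isCompact_closedBall _ _)).mono_set ball_subset_closedBall)
      (ae_of_all _ hg0)]
  exact ENNReal.ofReal_le_ofReal hβ

end Lines

section GoodSet

def goodLines (I J : ℝ → ℝ≥0∞) (ε : ℝ) : Set ℝ :=
  Icc (-(1 - ε ^ 2)) (1 - ε ^ 2) ∩ {t | I t < ENNReal.ofReal (8 * ε ^ 2)} ∩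
    {t | J t < ENNReal.ofReal (2 / 5 * ε ^ 2)}

lemma goodLines_subset_Ioo {I J : ℝ → ℝ≥0∞} {ε : ℝ} (hε : 0 < ε) :
    goodLines I J ε ⊆ Ioo (-1) 1 := fun _ ht =>
  ⟨by nlinarith [ht.1.1.1], by nlinarith [ht.1.1.2]⟩

lemma volume_le_div_of_lintegral_le {I : ℝ → ℝ≥0∞} (hI : Measurable I) {β L : ℝ}
    (hIβ : ∫⁻ t, I t ≤ ENNReal.ofReal β) (hL : 0 < L) :
    volume {t | ENNReal.ofReal L ≤ I t} ≤ ENNReal.ofReal (β / L) :=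
  calc volume {t | ENNReal.ofReal L ≤ I t} ≤ (∫⁻ t, I t) / ENNReal.ofReal L :=
        meas_ge_le_lintegral_div hI.aemeasurable (by simpa using hL) ENNReal.ofReal_ne_top
    _ ≤ ENNReal.ofReal β / ENNReal.ofReal L := by gcongr
    _ = ENNReal.ofReal (β / L) := (ENNReal.ofReal_div_of_pos hL).symm

lemma volume_Ioo_diff_Icc {δ : ℝ} (hδ : 0 < δ) (hδ1 : δ ≤ 1) :
    volume (Ioo (-1 : ℝ) 1 \ Icc (-(1 - δ)) (1 - δ)) = ENNReal.ofReal (2 * δ) := by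
  rw [measure_sdiff (Icc_subset_Ioo (by linarith) (by linarith))
    measurableSet_Icc.nullMeasurableSet measure_Icc_lt_top.ne, Real.volume_Ioo, Real.volume_Icc,
    ← ENNReal.ofReal_sub _ (by linarith)]
  ring_nf

lemma volume_Ioo_diff_goodLines_le {I J : ℝ → ℝ≥0∞} (hI : Measurable I) (hJ : Measurable J)
    {ε : ℝ} (hε : 0 < ε) (hε1 : ε ≤ 1) (hIε : ∫⁻ t, I t ≤ ENNReal.ofReal (ε ^ 3))
    (hJε : ∫⁻ t, J t ≤ ENNReal.ofReal (ε ^ 3)) :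
    volume (Ioo (-1 : ℝ) 1 \ goodLines I J ε) ≤ ENNReal.ofReal (5 * ε) := by
  have hsub : Ioo (-1 : ℝ) 1 \ goodLines I J ε ⊆
      (Ioo (-1 : ℝ) 1 \ Icc (-(1 - ε ^ 2)) (1 - ε ^ 2) ∪ {t | ENNReal.ofReal (8 * ε ^ 2) ≤ I t}) ∪
        {t | ENNReal.ofReal (2 / 5 * ε ^ 2) ≤ J t} := by
    rintro t ⟨ht, hbad⟩
    by_cases hedge : t ∈ Icc (-(1 - ε ^ 2)) (1 - ε ^ 2)
    · by_cases hmass : I t < ENNReal.ofReal (8 * ε ^ 2)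
      · exact Or.inr (not_lt.1 fun henergy => hbad ⟨⟨hedge, hmass⟩, henergy⟩ :
          ENNReal.ofReal (2 / 5 * ε ^ 2) ≤ J t)
      · exact Or.inl (Or.inr (not_lt.1 hmass : ENNReal.ofReal (8 * ε ^ 2) ≤ I t))
    · exact Or.inl (Or.inl ⟨ht, hedge⟩)
  have hedge := volume_Ioo_diff_Icc (δ := ε ^ 2) (by positivity) (by nlinarith)
  have hmass := volume_le_div_of_lintegral_le hI hIε (L := 8 * ε ^ 2) (by positivity)
  have henergy := volume_le_div_of_lintegral_le hJ hJε (L := 2 / 5 * ε ^ 2) (by positivity)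
  calc _ ≤ _ := measure_mono hsub
    _ ≤ ENNReal.ofReal (2 * ε ^ 2) + ENNReal.ofReal (ε ^ 3 / (8 * ε ^ 2)) +
        ENNReal.ofReal (ε ^ 3 / (2 / 5 * ε ^ 2)) :=
      (measure_union_le _ _).trans (add_le_add ((measure_union_le _ _).trans
        (add_le_add hedge.le hmass)) henergy)
    _ ≤ ENNReal.ofReal (5 * ε) := by
      rw [← ENNReal.ofReal_add (by positivity) (by positivity),
        ← ENNReal.ofReal_add (by positivity) (by positivity)]
      refine ENNReal.ofReal_le_ofReal ?_
      field_simp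
      nlinarith

end GoodSet

lemma abs_one_sub_gradSq_le_of_mem_goodLines {u : E2 → ℝ}
    (hu : ContDiffOn ℝ 2 u (closedBall (0 : E2) 1)) {w : E2} (hw : ‖w‖ = 1) {ε t : ℝ}
    (hε : 0 < ε) (hε1 : ε ≤ 1)
    (ht : t ∈ goodLines (lineLIntegral (fun z => |1 - gradSq u z|) w)
      (lineLIntegral (fun z => |1 - gradSq u z| * hessNorm u z) w) ε)
    {z : E2} (hz : z ∈ ball (0 : E2) 1) (hzt : ⟪perp w, z⟫_ℝ = t) :
    |1 - gradSq u z| ≤ 5 * ε := by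
  obtain ⟨⟨hedge, hmass⟩, henergy⟩ := ht
  set r := √(1 - t ^ 2)
  have hεr : ε ≤ r := Real.le_sqrt_of_sq_le <| by nlinarith [hedge.1, hedge.2]
  have hline (s : ℝ) (hs : s ∈ Ioo (-r) r) : t • perp w + s • w ∈ ball (0 : E2) 1 :=
    (lineCoords_mem_ball_iff hw t s).2 hs
  have hderiv (s : ℝ) (hs : s ∈ Ioo (-r) r) :=
    (hasDerivAt_gradSq_comp_line hu (hline s hs)).const_sub 1
  rw [← lineCoords_inner hw z, hzt]
  refine abs_le_of_lintegral_lt (N := fun s => hessNorm u (lineCoords w (t, s))) hε hε1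
    (by linarith) (fun s hs => (hderiv s hs).differentiableAt)
    ((continuousOn_hessNorm hu).comp (continuous_lineCoords w |>.comp (by fun_prop)).continuousOn
      fun s hs => ball_subset_closedBall (hline s hs))
    (fun s _ => Real.sqrt_nonneg _) (fun s hs => ?_) hmass henergy ?_
  · rw [(hderiv s hs).deriv, abs_neg]
    refine (abs_two_mul_sum_pdB_mul_le u hw _).trans
      (mul_le_mul_of_nonneg_right ?_ (Real.sqrt_nonneg _))
    exact mul_le_mul_of_nonneg_left (sqrt_le_one_add_abs_one_sub (gradSq_nonneg u _)) zero_le_two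
  · rw [← lineCoords_mem_ball_iff hw, ← hzt, lineCoords_inner hw z]
    exact hz

end GoodLines

open GoodLines in
/-- `P_{w^⊥}(B_1(0))` is identified with `(-1,1)` through the coordinate `z ↦ ⟪z, w^⊥⟫`. -/
theorem good_lines_lemma :
    ∃ c > (0 : ℝ), ∀ u : E2 → ℝ, ContDiffOn ℝ 2 u (closedBall (0 : E2) 1) →
      ∀ β ∈ Set.Ioo (0 : ℝ) 1,
        (∫ z in ball (0 : E2) 1, |1 - gradSq u z| * hessNorm u z) ≤ β →
        (∫ z in ball (0 : E2) 1, |1 - gradSq u z|) ≤ β →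
        ∀ w : E2, ‖w‖ = 1 →
          ∃ G : Set ℝ, G ⊆ Set.Ioo (-1 : ℝ) 1 ∧
            volume (Set.Ioo (-1 : ℝ) 1 \ G) ≤ ENNReal.ofReal (c * β ^ ((1 : ℝ) / 3)) ∧
            ∀ t ∈ G, ∀ z ∈ ball (0 : E2) 1, (∑ i, z i * perp w i) = t →
              |Real.sqrt (gradSq u z) - 1| ≤ 5 * β ^ ((1 : ℝ) / 3) := by
  refine ⟨5, by norm_num, fun u hu β hβ hEnergy hMass w hw => ?_⟩
  set ε := β ^ ((1 : ℝ) / 3)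
  have hε : 0 < ε := Real.rpow_pos_of_pos hβ.1 _
  have hε1 : ε ≤ 1 := Real.rpow_le_one hβ.1.le hβ.2.le (by norm_num)
  have hβε : β = ε ^ 3 := by
    rw [← Real.rpow_natCast, ← Real.rpow_mul hβ.1.le]
    norm_num
  have hf : ContinuousOn (fun z => |1 - gradSq u z|) (closedBall (0 : E2) 1) :=
    (continuousOn_const.sub (continuousOn_gradSq hu)).abs
  have hfh := hf.mul (continuousOn_hessNorm hu)
  refine ⟨_, goodLines_subset_Ioo hε,
    volume_Ioo_diff_goodLines_le (measurable_lineLIntegral hw (hf.mono ball_subset_closedBall))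
      (measurable_lineLIntegral hw (hfh.mono ball_subset_closedBall)) hε hε1
      (lintegral_lineLIntegral_le hw hf (fun _ => abs_nonneg _) (hβε ▸ hMass))
      (lintegral_lineLIntegral_le hw hfh (fun _ => mul_nonneg (abs_nonneg _) (Real.sqrt_nonneg _))
        (hβε ▸ hEnergy)),
    fun t ht z hz hzt => (abs_sqrt_sub_one_le (gradSq_nonneg u z)).trans
      (abs_one_sub_gradSq_le_of_mem_goodLines hu hw hε hε1 ht hz ?_)⟩
  simpa [PiLp.inner_apply, mul_comm] using hzt
end
end

section
/- Let γ : [0, L] → ℝ² be a C¹ curve parametrized by arclength (|γ′(s)| = 1 for all s), with endpoints a = γ(0), b = γ(L), a ≠ b, and set e = (b − a)/|b − a| and Δ = L − |b − a| ≥ 0. Then: (i) ∫₀^L |γ′(s) − e|² ds = 2Δ; and (ii) every point of the curve lies within distance 2√(LΔ) + Δ of the line segment [a, b]. -/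
/-!
Writing `e` for the unit vector from `a` to `b`, the identity `‖γ' - e‖² = 2 - 2⟪e, γ'⟫`
integrates to `2L - 2⟪e, b - a⟫ = 2Δ`. The deviation of `γ s` from the point `a + s e`
is `‖∫₀ˢ (γ' - e)‖ ≤ √L · √(2Δ)` by Cauchy–Schwarz, and `a + s e` lies within `Δ` of the
segment, since it overshoots `b` by at most `s - |b - a| ≤ Δ`.
-/

open MeasureTheory Metric Set Filter
open scoped Real Topology BigOperators

noncomputable section

open scoped InnerProductSpace

theorem sq_intervalIntegral_le_mul_integral_sq {f : ℝ → ℝ} {a b : ℝ} (hab : a ≤ b)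
    (hf : ContinuousOn f (Icc a b)) :
    (∫ x in a..b, f x) ^ 2 ≤ (b - a) * ∫ x in a..b, f x ^ 2 := by
  rcases hab.eq_or_lt with rfl | hlt
  · simp
  set m := (∫ x in a..b, f x) / (b - a)
  have hint : ∀ g : ℝ → ℝ, ContinuousOn g (Icc a b) → IntervalIntegrable g volume a b :=
    fun g hg => hg.intervalIntegrable_of_Icc hab
  have hvar : 0 ≤ ∫ x in a..b, (f x - m) ^ 2 :=
    intervalIntegral.integral_nonneg hab fun x _ => sq_nonneg _
  have hexpand : ∫ x in a..b, (f x - m) ^ 2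
      = (∫ x in a..b, f x ^ 2) - 2 * m * (∫ x in a..b, f x) + m ^ 2 * (b - a) := by
    simp_rw [sub_sq]
    rw [intervalIntegral.integral_add, intervalIntegral.integral_sub,
      intervalIntegral.integral_mul_const, intervalIntegral.integral_const_mul,
      intervalIntegral.integral_const, smul_eq_mul]
    · ring
    all_goals exact hint _ (by fun_prop)
  have hmean : m * (b - a) = ∫ x in a..b, f x := div_mul_cancel₀ _ (sub_pos.2 hlt).ne'
  rw [hexpand] at hvar
  nlinarith

theorem intervalIntegral_le_sqrt_mul_sqrt_integral_sq_of_mem_Icc {f : ℝ → ℝ} {a b s : ℝ}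
    (hf : ContinuousOn f (Icc a b)) (hs : s ∈ Icc a b) :
    ∫ x in a..s, f x ≤ √(b - a) * √(∫ x in a..b, f x ^ 2) := by
  have hmono : ∫ x in a..s, f x ^ 2 ≤ ∫ x in a..b, f x ^ 2 :=
    intervalIntegral.integral_mono_interval le_rfl hs.1 hs.2
      (Eventually.of_forall fun x => sq_nonneg (f x))
      ((hf.pow 2).intervalIntegrable_of_Icc (hs.1.trans hs.2))
  have hsq_nonneg : 0 ≤ ∫ x in a..s, f x ^ 2 :=
    intervalIntegral.integral_nonneg hs.1 fun x _ => sq_nonneg (f x)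
  calc ∫ x in a..s, f x
      ≤ |∫ x in a..s, f x| := le_abs_self _
    _ ≤ √((s - a) * ∫ x in a..s, f x ^ 2) :=
        Real.abs_le_sqrt (sq_intervalIntegral_le_mul_integral_sq hs.1
          (hf.mono (Icc_subset_Icc le_rfl hs.2)))
    _ ≤ √((b - a) * ∫ x in a..b, f x ^ 2) :=
        Real.sqrt_le_sqrt (mul_le_mul (by linarith [hs.2]) hmono hsq_nonneg
          (by linarith [hs.1.trans hs.2]))
    _ = √(b - a) * √(∫ x in a..b, f x ^ 2) := Real.sqrt_mul (by linarith [hs.1.trans hs.2]) _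

theorem norm_inv_norm_smul_of_ne_zero {E : Type*} [NormedAddCommGroup E] [NormedSpace ℝ E]
    {x : E} (hx : x ≠ 0) : ‖‖x‖⁻¹ • x‖ = 1 := by
  rw [norm_smul, norm_inv, norm_norm, inv_mul_cancel₀ (norm_ne_zero_iff.2 hx)]

theorem infDist_add_smul_direction_segment_le {E : Type*} [NormedAddCommGroup E]
    [NormedSpace ℝ E] {a b : E} (hab : a ≠ b) {t : ℝ} (ht : 0 ≤ t) :
    infDist (a + t • ‖b - a‖⁻¹ • (b - a)) (segment ℝ a b) ≤ max (t - ‖b - a‖) 0 := by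
  set d := ‖b - a‖
  have hd : 0 < d := norm_pos_iff.2 (sub_ne_zero.2 hab.symm)
  have hmem : a + min t d • d⁻¹ • (b - a) ∈ segment ℝ a b := by
    rw [segment_eq_image']
    refine ⟨min t d / d, ⟨by positivity, (div_le_one hd).2 (min_le_right _ _)⟩, ?_⟩
    simp only [smul_smul, div_eq_mul_inv]
  calc infDist (a + t • d⁻¹ • (b - a)) (segment ℝ a b)
      ≤ dist (a + t • d⁻¹ • (b - a)) (a + min t d • d⁻¹ • (b - a)) :=
        infDist_le_dist_of_mem hmem
    _ = t - min t d := by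
      rw [dist_add_left, dist_eq_norm, ← sub_smul, norm_smul,
        norm_inv_norm_smul_of_ne_zero (sub_ne_zero.2 hab.symm), mul_one,
        Real.norm_of_nonneg (sub_nonneg.2 (min_le_left _ _))]
    _ = max (t - d) 0 := by
      rcases le_total t d with h | h <;> simp [h]

variable {E : Type*} [NormedAddCommGroup E] [InnerProductSpace ℝ E] [CompleteSpace E]

theorem integral_eq_sub_of_hasDerivAt_Icc {f f' : ℝ → E} {a b : ℝ} (hab : a ≤ b)
    (hderiv : ∀ x ∈ Icc a b, HasDerivAt f (f' x) x) (hcont : ContinuousOn f' (Icc a b)) :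
    ∫ x in a..b, f' x = f b - f a :=
  intervalIntegral.integral_eq_sub_of_hasDerivAt_of_le hab
    (fun x hx => (hderiv x hx).continuousAt.continuousWithinAt)
    (fun x hx => hderiv x (Ioo_subset_Icc_self hx)) (hcont.intervalIntegrable_of_Icc hab)

section Curve

variable {γ γ' : ℝ → E} {L : ℝ}
  (hderiv : ∀ s ∈ Icc (0 : ℝ) L, HasDerivAt γ (γ' s) s) (hcont : ContinuousOn γ' (Icc 0 L))
include hderiv hcont

theorem norm_sub_sub_smul_le_integral_norm_sub (e : E) {s : ℝ} (hs : s ∈ Icc 0 L) :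
    ‖γ s - γ 0 - s • e‖ ≤ ∫ r in (0 : ℝ)..s, ‖γ' r - e‖ := by
  have hsub : Icc 0 s ⊆ Icc 0 L := Icc_subset_Icc le_rfl hs.2
  have hint : IntervalIntegrable γ' volume 0 s :=
    (hcont.mono hsub).intervalIntegrable_of_Icc hs.1
  calc ‖γ s - γ 0 - s • e‖ = ‖∫ r in (0 : ℝ)..s, (γ' r - e)‖ := by
        rw [intervalIntegral.integral_sub hint intervalIntegrable_const,
          integral_eq_sub_of_hasDerivAt_Icc hs.1 (fun r hr => hderiv r (hsub hr)) (hcont.mono hsub),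
          intervalIntegral.integral_const, sub_zero]
    _ ≤ ∫ r in (0 : ℝ)..s, ‖γ' r - e‖ := intervalIntegral.norm_integral_le_integral_norm hs.1

variable (hunit : ∀ s ∈ Icc (0 : ℝ) L, ‖γ' s‖ = 1)
include hunit

theorem norm_sub_le_of_norm_deriv_eq_one (hL : 0 ≤ L) : ‖γ L - γ 0‖ ≤ L := by
  have h := norm_sub_sub_smul_le_integral_norm_sub hderiv hcont 0 ⟨hL, le_rfl⟩
  rwa [smul_zero, sub_zero, intervalIntegral.integral_congr (g := fun _ => (1 : ℝ))
    (fun s hs => by simpa using hunit s (uIcc_of_le hL ▸ hs)),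
    intervalIntegral.integral_const, smul_eq_mul, mul_one, sub_zero] at h

theorem integral_norm_deriv_sub_sq_eq (hL : 0 ≤ L) {e : E} (he : ‖e‖ = 1) :
    ∫ s in (0 : ℝ)..L, ‖γ' s - e‖ ^ 2 = 2 * L - 2 * ⟪e, γ L - γ 0⟫_ℝ := by
  have hint : IntervalIntegrable γ' volume 0 L := hcont.intervalIntegrable_of_Icc hL
  have hpoint : EqOn (fun s => ‖γ' s - e‖ ^ 2) (fun s => 2 - 2 * ⟪e, γ' s⟫_ℝ) (uIcc 0 L) := by
    intro s hs
    rw [uIcc_of_le hL] at hs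
    simp only [norm_sub_sq_real, hunit s hs, he, real_inner_comm e]
    ring
  have hinner : ∫ s in (0 : ℝ)..L, ⟪e, γ' s⟫_ℝ = ⟪e, γ L - γ 0⟫_ℝ := by
    rw [← integral_eq_sub_of_hasDerivAt_Icc hL hderiv hcont]
    exact (innerSL ℝ e).intervalIntegral_comp_comm hint
  rw [intervalIntegral.integral_congr hpoint, intervalIntegral.integral_sub intervalIntegrable_const
    (((continuousOn_const.inner hcont).intervalIntegrable_of_Icc hL).const_mul 2),
    intervalIntegral.integral_const_mul, hinner, intervalIntegral.integral_const, smul_eq_mul,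
    sub_zero, mul_comm L]

theorem infDist_segment_le_sqrt_mul_sqrt_add (hne : γ 0 ≠ γ L) {s : ℝ} (hs : s ∈ Icc 0 L) :
    infDist (γ s) (segment ℝ (γ 0) (γ L))
      ≤ √L * √(∫ r in (0 : ℝ)..L, ‖γ' r - ‖γ L - γ 0‖⁻¹ • (γ L - γ 0)‖ ^ 2)
        + (L - ‖γ L - γ 0‖) := by
  set e := ‖γ L - γ 0‖⁻¹ • (γ L - γ 0)
  have hlen := norm_sub_le_of_norm_deriv_eq_one hderiv hcont hunit (hs.1.trans hs.2)
  have hdev : ∫ r in (0 : ℝ)..s, ‖γ' r - e‖ ≤ √L * √(∫ r in (0 : ℝ)..L, ‖γ' r - e‖ ^ 2) := by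
    simpa using intervalIntegral_le_sqrt_mul_sqrt_integral_sq_of_mem_Icc
      (hcont.sub continuousOn_const).norm hs
  calc infDist (γ s) (segment ℝ (γ 0) (γ L))
      ≤ infDist (γ 0 + s • e) (segment ℝ (γ 0) (γ L)) + dist (γ s) (γ 0 + s • e) :=
        infDist_le_infDist_add_dist
    _ ≤ max (s - ‖γ L - γ 0‖) 0 + ∫ r in (0 : ℝ)..s, ‖γ' r - e‖ := by
        gcongr
        · exact infDist_add_smul_direction_segment_le hne hs.1
        · rw [dist_eq_norm, ← sub_sub]
          exact norm_sub_sub_smul_le_integral_norm_sub hderiv hcont e hs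
    _ ≤ _ := by
        rw [add_comm]
        gcongr
        exact max_le (by linarith [hs.2]) (by linarith)

end Curve

/-- Let `γ : [0,L] → ℝ²` be a `C¹` curve parametrized by arclength
with endpoints `a = γ(0) ≠ b = γ(L)`, `e = (b−a)/|b−a|` and `Δ = L − |b−a|`. Then
`Δ ≥ 0`, `∫₀^L |γ'(s) − e|² ds = 2Δ`, and every point of the curve lies within
distance `2√(LΔ) + Δ` of the segment `[a,b]`. -/
theorem arclength_curve_close_to_segment
    (L : ℝ) (hL : 0 ≤ L) (γ γ' : ℝ → E2)
    (hderiv : ∀ s ∈ Set.Icc (0 : ℝ) L, HasDerivAt γ (γ' s) s)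
    (hcont : ContinuousOn γ' (Set.Icc (0 : ℝ) L))
    (hunit : ∀ s ∈ Set.Icc (0 : ℝ) L, ‖γ' s‖ = 1)
    (hne : γ 0 ≠ γ L) :
    0 ≤ L - ‖γ L - γ 0‖ ∧
    (∫ s in (0 : ℝ)..L, ‖γ' s - ‖γ L - γ 0‖⁻¹ • (γ L - γ 0)‖ ^ 2)
      = 2 * (L - ‖γ L - γ 0‖) ∧
    ∀ s ∈ Set.Icc (0 : ℝ) L,
      Metric.infDist (γ s) (segment ℝ (γ 0) (γ L))
        ≤ 2 * Real.sqrt (L * (L - ‖γ L - γ 0‖)) + (L - ‖γ L - γ 0‖) := by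
  have hv : γ L - γ 0 ≠ 0 := sub_ne_zero.2 hne.symm
  have hΔ : 0 ≤ L - ‖γ L - γ 0‖ :=
    sub_nonneg.2 (norm_sub_le_of_norm_deriv_eq_one hderiv hcont hunit hL)
  have hsq : ∫ s in (0 : ℝ)..L, ‖γ' s - ‖γ L - γ 0‖⁻¹ • (γ L - γ 0)‖ ^ 2
      = 2 * (L - ‖γ L - γ 0‖) := by
    rw [integral_norm_deriv_sub_sq_eq hderiv hcont hunit hL (norm_inv_norm_smul_of_ne_zero hv),
      real_inner_smul_left, real_inner_self_eq_norm_sq]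
    field_simp
  refine ⟨hΔ, hsq, fun s hs => ?_⟩
  calc Metric.infDist (γ s) (segment ℝ (γ 0) (γ L))
      ≤ √L * √(2 * (L - ‖γ L - γ 0‖)) + (L - ‖γ L - γ 0‖) :=
        hsq ▸ infDist_segment_le_sqrt_mul_sqrt_add hderiv hcont hunit hne hs
    _ ≤ 2 * √(L * (L - ‖γ L - γ 0‖)) + (L - ‖γ L - γ 0‖) := by
        gcongr ?_ + _
        rw [← Real.sqrt_mul hL, Real.sqrt_le_iff, mul_pow, Real.sq_sqrt (mul_nonneg hL hΔ)]
        exact ⟨by positivity, by nlinarith⟩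
end
end
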